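/- Let L = I - H∂_x - Q with Q(x) = 4/(1+x^2). Then LQ = -(1/2)Q^2 and L(Q^2) = -2Q - Q^2. -/

import Mathlib

open MeasureTheory Real

/-- The soliton profile. -/
noncomputable def Q (x : ℝ) : ℝ := 4 / (1 + x ^ 2)

/-- The Hilbert transform, `Hf(x) = -(1/π) p.v. ∫ f(y)/(x-y) dy`. -/
noncomputable def hilbertT (f : ℝ → ℝ) (x : ℝ) : ℝ :=
  -(1 / Real.pi) * Filter.limUnder (nhdsWithin 0 (Set.Ioi 0))
    (fun ε : ℝ => ∫ y in {y : ℝ | ε ≤ |x - y|}, f y / (x - y))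

/-- The linearized operator `L = I - H∂ₓ - Q`. -/
noncomputable def Lop (f : ℝ → ℝ) (x : ℝ) : ℝ := f x - hilbertT (deriv f) x - Q x * f x

/-!
The Hilbert transform of `g` at `x` is computed from a primitive `F` of `y ↦ g y / (x - y)` on
`ℝ \ {x}`: the truncated integral is `F (x - ε) - F (-∞) + F (∞) - F (x + ε)`. For primitives of
the form `A (log (1 + y²) - log ((x - y)²)) + P arctan y + R y` with `R` continuous and vanishing at
infinity, the logarithmic singularity cancels between `x ± ε` and `F (∞) - F (-∞) = P π`, so
`H g x = -P`. Such primitives for `Q'` and `(Q²)'` come from the partial fraction identity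
`1 / ((1 + y²) (x - y)) = (1 / (x - y) + (x + y) / (1 + y²)) / (1 + x²)`; this gives
`H Q' = (4x² - 4) / (1 + x²)²` and `H (Q²)' = (8x⁴ + 48x² - 24) / (1 + x²)³`, after which both
identities are rational-function algebra.
-/

open Set Filter Topology Bornology

lemma tendsto_inv_one_add_sq_cobounded :
    Tendsto (fun y : ℝ => (1 + y ^ 2)⁻¹) (cobounded ℝ) (𝓝 0) := by
  refine Tendsto.inv_tendsto_atTop (tendsto_atTop_mono (fun y => ?_) tendsto_norm_cobounded_atTop)
  rw [Real.norm_eq_abs]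
  nlinarith [sq_abs y, abs_nonneg y]

lemma tendsto_div_one_add_sq_cobounded :
    Tendsto (fun y : ℝ => y / (1 + y ^ 2)) (cobounded ℝ) (𝓝 0) := by
  refine squeeze_zero_norm (fun y => ?_) (tendsto_norm_zero.comp tendsto_inv₀_cobounded)
  simp only [Function.comp, norm_div, norm_inv, Real.norm_eq_abs]
  rcases eq_or_ne y 0 with rfl | hy
  · simp
  rw [div_le_iff₀ (by positivity), abs_of_pos (by positivity : (0 : ℝ) < 1 + y ^ 2), ← sq_abs]
  field_simp
  nlinarith [abs_pos.2 hy]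

lemma tendsto_log_one_add_sq_sub_log_sq_cobounded (x : ℝ) :
    Tendsto (fun y => log (1 + y ^ 2) - log ((x - y) ^ 2)) (cobounded ℝ) (𝓝 0) := by
  set φ : ℝ → ℝ := fun w => log ((w ^ 2 + 1) / (x * w - 1) ^ 2)
  have hφ : ContinuousAt φ 0 := by
    refine ContinuousAt.log ?_ (by norm_num)
    exact ((continuous_pow 2).add continuous_const).continuousAt.div (by fun_prop) (by norm_num)
  have hφ0 : φ 0 = 0 := by norm_num [φ]
  rw [← hφ0]
  refine (hφ.tendsto.comp tendsto_inv₀_cobounded).congr' ?_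
  filter_upwards [tendsto_norm_cobounded_atTop.eventually_gt_atTop |x|] with y hy
  have hy0 : y ≠ 0 := norm_pos_iff.1 ((abs_nonneg x).trans_lt hy)
  have hxy : x - y ≠ 0 := sub_ne_zero.2 fun h => by rw [← h, Real.norm_eq_abs] at hy; exact hy.false
  have hratio : (y⁻¹ ^ 2 + 1) / (x * y⁻¹ - 1) ^ 2 = (1 + y ^ 2) / (x - y) ^ 2 := by
    field_simp
  simp only [Function.comp, φ, hratio]
  rw [Real.log_div (by positivity) (by positivity)]


section PrincipalValue

variable {g F : ℝ → ℝ} {x a b ε : ℝ}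

lemma integrableOn_div_sub_of_integrable (hg : Integrable g) (hε : 0 < ε) :
    IntegrableOn (fun y => g y / (x - y)) {y | ε ≤ |x - y|} := by
  have hbdd : ∀ᵐ y ∂volume.restrict {y | ε ≤ |x - y|}, ‖(x - y)⁻¹‖ ≤ ε⁻¹ := by
    refine (ae_restrict_iff' (measurableSet_le measurable_const
      (measurable_const.sub measurable_id).abs)).2 (Eventually.of_forall fun y hy => ?_)
    rw [norm_inv, Real.norm_eq_abs]
    exact inv_anti₀ hε hy
  simp only [div_eq_inv_mul]
  exact hg.integrableOn.bdd_mul (by fun_prop) hbdd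

lemma setOf_le_abs_sub_eq_Iic_union_Ici :
    {y | ε ≤ |x - y|} = Iic (x - ε) ∪ Ici (x + ε) := by
  ext y
  simp only [mem_ofPred_eq, mem_union, mem_Iic, mem_Ici, le_abs, neg_sub]
  constructor <;> rintro (h | h) <;> [left; right; left; right] <;> linarith

lemma setIntegral_setOf_le_abs_sub_of_hasDerivAt (hg : Integrable g)
    (hF : ∀ y ≠ x, HasDerivAt F (g y / (x - y)) y)
    (hbot : Tendsto F atBot (𝓝 a)) (htop : Tendsto F atTop (𝓝 b)) (hε : 0 < ε) :
    ∫ y in {y | ε ≤ |x - y|}, g y / (x - y) = (F (x - ε) - a) + (b - F (x + ε)) := by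
  have hint := integrableOn_div_sub_of_integrable (x := x) hg hε
  rw [setOf_le_abs_sub_eq_Iic_union_Ici] at hint ⊢
  have hdisj : Disjoint (Iic (x - ε)) (Ici (x + ε)) := Iic_disjoint_Ici.2 (by linarith)
  rw [setIntegral_union hdisj measurableSet_Ici (hint.mono_set subset_union_left)
    (hint.mono_set subset_union_right), integral_Ici_eq_integral_Ioi]
  congr 1
  · exact integral_Iic_of_hasDerivAt_of_tendsto' (fun y hy => hF y (by grind))
      (hint.mono_set subset_union_left) hbot
  · exact integral_Ioi_of_hasDerivAt_of_tendsto' (fun y hy => hF y (by grind))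
      ((hint.mono_set subset_union_right).mono_set Ioi_subset_Ici_self) htop

lemma hilbertT_eq_of_hasDerivAt (hg : Integrable g)
    (hF : ∀ y ≠ x, HasDerivAt F (g y / (x - y)) y)
    (hbot : Tendsto F atBot (𝓝 a)) (htop : Tendsto F atTop (𝓝 b))
    (hsymm : Tendsto (fun ε => F (x - ε) - F (x + ε)) (𝓝[>] 0) (𝓝 0)) :
    hilbertT g x = -(1 / π) * (b - a) := by
  have hlim : Tendsto (fun ε => ∫ y in {y | ε ≤ |x - y|}, g y / (x - y)) (𝓝[>] 0)
      (𝓝 (b - a)) := by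
    have hshift := hsymm.add_const (b - a)
    rw [zero_add] at hshift
    refine hshift.congr' ?_
    filter_upwards [self_mem_nhdsWithin] with ε hε
    rw [setIntegral_setOf_le_abs_sub_of_hasDerivAt hg hF hbot htop hε]
    ring
  rw [hilbertT, hlim.limUnder_eq]

lemma hilbertT_eq_of_hasDerivAt_log_arctan {R : ℝ → ℝ} {A P : ℝ} (hg : Integrable g)
    (hRc : Continuous R) (hR : Tendsto R (cobounded ℝ) (𝓝 0))
    (hF : ∀ y ≠ x, HasDerivAt
      (fun y => A * (log (1 + y ^ 2) - log ((x - y) ^ 2)) + P * arctan y + R y) (g y / (x - y)) y) :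
    hilbertT g x = -P := by
  set F := fun y => A * (log (1 + y ^ 2) - log ((x - y) ^ 2)) + P * arctan y + R y
  have hlim : ∀ {l : Filter ℝ} {c : ℝ}, l ≤ cobounded ℝ → Tendsto arctan l (𝓝 c) →
      Tendsto F l (𝓝 (P * c)) := fun hl harctan => by
    have := ((((tendsto_log_one_add_sq_sub_log_sq_cobounded x).mono_left hl).const_mul A).add
      (harctan.const_mul P)).add (hR.mono_left hl)
    rwa [mul_zero, zero_add, add_zero] at this
  set K := fun y => A * log (1 + y ^ 2) + P * arctan y + R y
  have hK : Continuous K := by fun_prop (disch := intros; positivity)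
  have hsymm : Tendsto (fun ε => F (x - ε) - F (x + ε)) (𝓝[>] 0) (𝓝 0) := by
    have hK0 : Tendsto (fun ε => K (x - ε) - K (x + ε)) (𝓝 0) (𝓝 (K (x - 0) - K (x + 0))) :=
      ((hK.comp (continuous_sub_left x)).sub (hK.comp (continuous_const_add x))).tendsto 0
    simp only [sub_zero, add_zero, sub_self] at hK0
    refine (hK0.mono_left nhdsWithin_le_nhds).congr fun ε => ?_
    simp only [F, K, sub_sub_cancel, sub_add_cancel_left, neg_sq]
    ring
  rw [hilbertT_eq_of_hasDerivAt hg hF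
    (hlim IsOrderBornology.atBot_le_cobounded (tendsto_arctan_atBot.mono_right nhdsWithin_le_nhds))
    (hlim IsOrderBornology.atTop_le_cobounded (tendsto_arctan_atTop.mono_right nhdsWithin_le_nhds))
    hsymm]
  field_simp
  ring

end PrincipalValue

lemma hasDerivAt_one_add_sq (y : ℝ) : HasDerivAt (fun y => 1 + y ^ 2) (2 * y) y := by
  simpa using (hasDerivAt_pow 2 y).const_add 1

lemma hasDerivAt_log_sub_log_add_arctan (x A P : ℝ) {y : ℝ} (hy : y ≠ x) :
    HasDerivAt (fun y => A * (log (1 + y ^ 2) - log ((x - y) ^ 2)) + P * arctan y)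
      ((2 * A * (1 + x * y) / (x - y) + P) / (1 + y ^ 2)) y := by
  have hxy : x - y ≠ 0 := sub_ne_zero.2 hy.symm
  have hlog₁ := (hasDerivAt_one_add_sq y).log (by positivity)
  have hlog₂ := (((hasDerivAt_id' y).const_sub x).fun_pow 2).log (pow_ne_zero 2 hxy)
  refine (((hlog₁.sub hlog₂).const_mul A).add ((hasDerivAt_arctan y).const_mul P)).congr_deriv ?_
  field_simp
  ring

lemma hasDerivAt_Q (y : ℝ) : HasDerivAt Q (-8 * y / (1 + y ^ 2) ^ 2) y := by
  refine ((hasDerivAt_const y 4).fun_div (hasDerivAt_one_add_sq y) (by positivity)).congr_deriv ?_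
  ring

lemma hasDerivAt_Q_sq (y : ℝ) : HasDerivAt (fun y => Q y ^ 2) (-64 * y / (1 + y ^ 2) ^ 3) y := by
  refine ((hasDerivAt_Q y).fun_pow 2).congr_deriv ?_
  have hpos : (1 + y ^ 2 : ℝ) ≠ 0 := by positivity
  simp only [Q]
  norm_num
  field_simp
  ring

lemma integrable_mul_div_one_add_sq_pow (c : ℝ) {n : ℕ} (hn : 2 ≤ n) :
    Integrable fun y : ℝ => c * y / (1 + y ^ 2) ^ n := by
  refine (integrable_inv_one_add_sq.const_mul |c|).mono'
    (by fun_prop : Measurable fun y : ℝ => c * y / (1 + y ^ 2) ^ n).aestronglyMeasurable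
    (Eventually.of_forall fun y => ?_)
  have hpos : (0 : ℝ) < 1 + y ^ 2 := by positivity
  have hy : |y| * (1 + y ^ 2) ≤ (1 + y ^ 2) ^ n :=
    calc |y| * (1 + y ^ 2) ≤ (1 + y ^ 2) ^ 2 := by
          rw [sq (1 + y ^ 2)]
          exact mul_le_mul_of_nonneg_right (by nlinarith [sq_abs y, abs_nonneg y]) hpos.le
      _ ≤ (1 + y ^ 2) ^ n := pow_le_pow_right₀ (by nlinarith) hn
  rw [norm_div, norm_mul, Real.norm_eq_abs, Real.norm_eq_abs, norm_pow, Real.norm_of_nonneg hpos.le,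
    mul_div_assoc]
  gcongr
  rwa [div_le_iff₀ (by positivity), ← div_eq_inv_mul, le_div_iff₀ hpos]

lemma hilbertT_deriv_Q (x : ℝ) : hilbertT (deriv Q) x = (4 * x ^ 2 - 4) / (1 + x ^ 2) ^ 2 := by
  have hx : (0 : ℝ) < 1 + x ^ 2 := by positivity
  rw [funext fun y => (hasDerivAt_Q y).deriv]
  have hR : Tendsto (fun y => 4 * (x + y) / ((1 + x ^ 2) * (1 + y ^ 2))) (cobounded ℝ) (𝓝 0) := by
    have := ((tendsto_inv_one_add_sq_cobounded.const_mul x).add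
      tendsto_div_one_add_sq_cobounded).const_mul (4 / (1 + x ^ 2))
    rw [mul_zero, add_zero, mul_zero] at this
    refine this.congr fun y => ?_
    field_simp
  rw [hilbertT_eq_of_hasDerivAt_log_arctan (A := -4 * x / (1 + x ^ 2) ^ 2)
    (P := (4 - 4 * x ^ 2) / (1 + x ^ 2) ^ 2) (integrable_mul_div_one_add_sq_pow (-8) le_rfl)
    (by fun_prop (disch := intros; positivity)) hR fun y hy => ?_]
  · ring
  have hR' := (((hasDerivAt_id' y).const_add x).const_mul 4).fun_div
    ((hasDerivAt_one_add_sq y).const_mul (1 + x ^ 2)) (by positivity)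
  refine ((hasDerivAt_log_sub_log_add_arctan x _ _ hy).add hR').congr_deriv ?_
  have hxy : x - y ≠ 0 := sub_ne_zero.2 hy.symm
  field_simp
  ring

lemma hilbertT_deriv_Q_sq (x : ℝ) :
    hilbertT (deriv fun y => Q y ^ 2) x = (8 * x ^ 4 + 48 * x ^ 2 - 24) / (1 + x ^ 2) ^ 3 := by
  have hx : (0 : ℝ) < 1 + x ^ 2 := by positivity
  rw [funext fun y => (hasDerivAt_Q_sq y).deriv]
  have hR : Tendsto (fun y => (32 * x + 24 * y - 8 * x ^ 2 * y) / ((1 + x ^ 2) ^ 2 * (1 + y ^ 2))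
      + 16 * (x + y) / ((1 + x ^ 2) * (1 + y ^ 2) ^ 2)) (cobounded ℝ) (𝓝 0) := by
    have hu := tendsto_inv_one_add_sq_cobounded
    have hv := tendsto_div_one_add_sq_cobounded
    have := (((hu.const_mul (32 * x)).add (hv.const_mul (24 - 8 * x ^ 2))).div_const
      ((1 + x ^ 2) ^ 2)).add ((((hu.const_mul x).add hv).mul hu).const_mul (16 / (1 + x ^ 2)))
    simp only [mul_zero, add_zero, zero_div] at this
    refine this.congr fun y => ?_
    field_simp
    ring
  rw [hilbertT_eq_of_hasDerivAt_log_arctan (A := -32 * x / (1 + x ^ 2) ^ 3)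
    (P := (24 - 48 * x ^ 2 - 8 * x ^ 4) / (1 + x ^ 2) ^ 3)
    (integrable_mul_div_one_add_sq_pow (-64) (by norm_num))
    (by fun_prop (disch := intros; positivity)) hR fun y hy => ?_]
  · ring
  have hR₁ := ((((hasDerivAt_id' y).const_mul 24).const_add (32 * x)).fun_sub
    ((hasDerivAt_id' y).const_mul (8 * x ^ 2))).fun_div
    ((hasDerivAt_one_add_sq y).const_mul ((1 + x ^ 2) ^ 2)) (by positivity)
  have hR₂ := (((hasDerivAt_id' y).const_add x).const_mul 16).fun_div
    (((hasDerivAt_one_add_sq y).fun_pow 2).const_mul (1 + x ^ 2)) (by positivity)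
  refine ((hasDerivAt_log_sub_log_add_arctan x _ _ hy).add (hR₁.add hR₂)).congr_deriv ?_
  have hxy : x - y ≠ 0 := sub_ne_zero.2 hy.symm
  field_simp
  ring

theorem Lop_Q_and_Qsq :
    (∀ x : ℝ, Lop Q x = -(1 / 2) * Q x ^ 2) ∧
      ∀ x : ℝ, Lop (fun y => Q y ^ 2) x = -2 * Q x - Q x ^ 2 := by
  refine ⟨fun x => ?_, fun x => ?_⟩ <;> have hx : (1 + x ^ 2 : ℝ) ≠ 0 := by positivity
  · rw [Lop, hilbertT_deriv_Q, Q]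
    field_simp
    ring
  · rw [Lop, hilbertT_deriv_Q_sq, Q]
    field_simp
    ring
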